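/- arXiv:2502.14392 — 3 statements merged into one kernel-verified Lean document; each statement's English description precedes it below -/
import Mathlib

section
/- Suppose that (G,m) is a ℤ²⋊Cs-tight gain graph that has a vertex v₀ of degree 3 with incident edges e₁=(v₀,v₁;m(e₁)), e₂=(v₀,v₂;m(e₂)) and e₃=(v₀,v₂;m(e₃)) (all oriented away from v₀), where v₁,v₂ are distinct vertices different from v₀, such that m(e₂) and m(e₃) have the same Cs-component. Let G−v₀+e₁₂ and G−v₀+e₁₃ be the gain graphs obtained by deleting v₀ with its incident edges and adding the edge e₁₂=(v₁,v₂;m(e₁)⁻¹m(e₂)), respectively e₁₃=(v₁,v₂;m(e₁)⁻¹m(e₃)). Then at least one of G−v₀+e₁₂ or G−v₀+e₁₃ is ℤ²⋊Cs-tight. -/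
namespace Crystal

/-- The wallpaper group `pm = ℤ² ⋊ 𝒞ₛ`.  An element is a pair of a translation
vector `t ∈ ℤ²` and a Boolean `r` recording the `𝒞ₛ`-component
(`true` = the reflection `s` in the x-axis). -/
@[ext] structure PM : Type where
  t : ℤ × ℤ
  r : Bool

namespace PM

/-- The action of the reflection component on translation vectors. -/
def act (σ : Bool) (z : ℤ × ℤ) : ℤ × ℤ := (z.1, if σ then -z.2 else z.2)

instance : Mul PM := ⟨fun a b => ⟨a.t + act a.r b.t, xor a.r b.r⟩⟩
instance : One PM := ⟨⟨0, false⟩⟩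
instance : Inv PM := ⟨fun a => ⟨act a.r (-a.t), a.r⟩⟩

lemma mul_def (a b : PM) : a * b = ⟨a.t + act a.r b.t, xor a.r b.r⟩ := rfl
lemma one_def : (1 : PM) = ⟨0, false⟩ := rfl
lemma inv_def (a : PM) : a⁻¹ = ⟨act a.r (-a.t), a.r⟩ := rfl

instance : Group PM where
  mul_assoc a b c := by
    obtain ⟨⟨x1, x2⟩, ra⟩ := a
    obtain ⟨⟨y1, y2⟩, rb⟩ := b
    obtain ⟨⟨z1, z2⟩, rc⟩ := c
    cases ra <;> cases rb <;> cases rc <;>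
      simp [mul_def, act, Prod.ext_iff] <;> omega
  one_mul a := by
    obtain ⟨⟨x1, x2⟩, ra⟩ := a
    cases ra <;> simp [mul_def, one_def, act]
  mul_one a := by
    obtain ⟨⟨x1, x2⟩, ra⟩ := a
    cases ra <;> simp [mul_def, one_def, act]
  inv_mul_cancel a := by
    obtain ⟨⟨x1, x2⟩, ra⟩ := a
    cases ra <;> simp [mul_def, one_def, inv_def, act, Prod.ext_iff]

/-- The affine action of `pm` on the plane: `(z,σ)·x = σ(x) + z`. -/
noncomputable def toPlane (g : PM) (x : ℝ × ℝ) : ℝ × ℝ :=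
  (x.1 + (g.t.1 : ℝ), (if g.r then -x.2 else x.2) + (g.t.2 : ℝ))

end PM

/-- A multigraph: a finite vertex set, a finite edge set, and two endpoint maps
(which also fix a reference orientation of every edge, from `fst` to `snd`).
Loops and parallel edges are allowed. -/
structure Multigraph (α β : Type) where
  verts : Finset α
  edges : Finset β
  fst : β → α
  snd : β → α
  fst_mem : ∀ e ∈ edges, fst e ∈ verts
  snd_mem : ∀ e ∈ edges, snd e ∈ verts

variable {α β : Type}

/-- `H` is a subgraph of `G`. -/
def IsSubgraph (H G : Multigraph α β) : Prop :=
  H.verts ⊆ G.verts ∧ H.edges ⊆ G.edges ∧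
    ∀ e ∈ H.edges, H.fst e = G.fst e ∧ H.snd e = G.snd e

/-- `(k,l)`-sparsity. -/
def Sparse (k l : ℕ) (G : Multigraph α β) : Prop :=
  ∀ H : Multigraph α β, IsSubgraph H G → 1 ≤ H.edges.card →
    (H.edges.card : ℤ) ≤ k * H.verts.card - l

/-- `(k,l)`-tightness. -/
def Tight (k l : ℕ) (G : Multigraph α β) : Prop :=
  Sparse k l G ∧ (G.edges.card : ℤ) = k * G.verts.card - l

/-- The degree of a vertex: the number of edge-incidences, loops counting twice. -/
def Multigraph.degree [DecidableEq α] (G : Multigraph α β) (v : α) : ℕ :=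
  ∑ e ∈ G.edges, ((if G.fst e = v then 1 else 0) + (if G.snd e = v then 1 else 0))

/-- The starting vertex of a step `(e, dir)` of a walk: `dir = true` means the
edge is traversed forwards. -/
def stepHead (G : Multigraph α β) (s : β × Bool) : α := if s.2 then G.fst s.1 else G.snd s.1

/-- The final vertex of a step of a walk. -/
def stepTail (G : Multigraph α β) (s : β × Bool) : α := if s.2 then G.snd s.1 else G.fst s.1

/-- `IsWalk G u v L` : `L` is a walk in `G` from `u` to `v`. -/
def IsWalk (G : Multigraph α β) : α → α → List (β × Bool) → Prop
  | u, v, [] => u = v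
  | u, v, s :: L => s.1 ∈ G.edges ∧ stepHead G s = u ∧ IsWalk G (stepTail G s) v L

/-- The net gain of a walk. -/
def walkGain (m : β → PM) (L : List (β × Bool)) : PM :=
  (L.map fun s => if s.2 then m s.1 else (m s.1)⁻¹).prod

/-- A gain graph is balanced if every closed walk has identity net gain. -/
def Balanced (G : Multigraph α β) (m : β → PM) : Prop :=
  ∀ u L, IsWalk G u u L → walkGain m L = 1

/-- A gain graph is purely periodic if every closed walk has net gain in the
translation subgroup `ℤ²`. -/
def PurelyPeriodic (G : Multigraph α β) (m : β → PM) : Prop :=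
  ∀ u L, IsWalk G u u L → (walkGain m L).r = false

/-- A multigraph is connected if every pair of its vertices is joined by a walk. -/
def Connected (G : Multigraph α β) : Prop :=
  ∀ u ∈ G.verts, ∀ v ∈ G.verts, ∃ L, IsWalk G u v L

/-- The conditions for `m` to be a gain assignment on `G`: parallel edges with the
same orientation get distinct gains, and loops get non-identity gains. -/
structure IsGainGraph (G : Multigraph α β) (m : β → PM) : Prop where
  parallel_ne : ∀ e ∈ G.edges, ∀ f ∈ G.edges,
    e ≠ f → G.fst e = G.fst f → G.snd e = G.snd f → m e ≠ m f
  loop_ne_one : ∀ e ∈ G.edges, G.fst e = G.snd e → m e ≠ 1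

/-- `ℤ²⋊𝒞ₛ`-tightness of a gain graph. -/
def PMTight (G : Multigraph α β) (m : β → PM) : Prop :=
  Tight 2 1 G ∧
    (∀ H : Multigraph α β, IsSubgraph H G → PurelyPeriodic H m → Sparse 2 2 H) ∧
    (∀ H : Multigraph α β, IsSubgraph H G → Balanced H m → Sparse 2 3 H)

/-- The orbit rigidity matrix of a `ℤ²⋊𝒞ₛ`-gain framework. -/
noncomputable def orbitMatrix [DecidableEq α] (G : Multigraph α β) (m : β → PM)
    (p : α → ℝ × ℝ) :
    Matrix {e : β // e ∈ G.edges} ({v : α // v ∈ G.verts} × Fin 2) ℝ :=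
  fun er vc =>
    let e : β := er.1
    let i : α := G.fst e
    let j : α := G.snd e
    let w : α := vc.1.1
    let entry : ℝ × ℝ :=
      if i = j then
        (if w = i then p i + p i - PM.toPlane (m e) (p i) - PM.toPlane (m e)⁻¹ (p i) else 0)
      else if w = i then p i - PM.toPlane (m e) (p j)
      else if w = j then p j - PM.toPlane (m e)⁻¹ (p i)
      else 0
    if vc.2 = 0 then entry.1 else entry.2

/-- A configuration is generic if its orbit rigidity matrix has the maximum
possible rank among all configurations. -/
def Generic [DecidableEq α] (G : Multigraph α β) (m : β → PM) (p : α → ℝ × ℝ) : Prop :=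
  ∀ q : α → ℝ × ℝ, (orbitMatrix G m q).rank ≤ (orbitMatrix G m p).rank

/-- A gain graph is rigid if the orbit rigidity matrix of a generic configuration
has rank `2|V| - 1`. -/
def Rigid [DecidableEq α] (G : Multigraph α β) (m : β → PM) : Prop :=
  ∃ p : α → ℝ × ℝ, Generic G m p ∧
    ((orbitMatrix G m p).rank : ℤ) = 2 * G.verts.card - 1

/-- A gain graph is independent if the rows of the orbit rigidity matrix of a
generic configuration are linearly independent. -/
def Independent [DecidableEq α] (G : Multigraph α β) (m : β → PM) : Prop :=
  ∃ p : α → ℝ × ℝ, Generic G m p ∧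
    LinearIndependent ℝ (fun er => orbitMatrix G m p er)

/-- A gain graph is minimally rigid if it is rigid and independent. -/
def MinimallyRigid [DecidableEq α] (G : Multigraph α β) (m : β → PM) : Prop :=
  Rigid G m ∧ Independent G m

/-- `e` joins `u` and `v` (in one of the two orientations). -/
def Joins (G : Multigraph α β) (e : β) (u v : α) : Prop :=
  (G.fst e = u ∧ G.snd e = v) ∨ (G.fst e = v ∧ G.snd e = u)

/-- The gain of an edge read with `v` as its initial vertex (inverting the gain
if the edge is oriented towards `v`). -/
def gainFrom [DecidableEq α] (G : Multigraph α β) (m : β → PM) (v : α) (e : β) : PM :=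
  if G.fst e = v then m e else (m e)⁻¹

/-- The endpoint of an edge other than `v` (for an edge incident with `v`). -/
def otherEnd [DecidableEq α] (G : Multigraph α β) (v : α) (e : β) : α :=
  if G.fst e = v then G.snd e else G.fst e

/-- Deletion of a vertex together with all edges incident with it. -/
def Multigraph.deleteVertex [DecidableEq α] (G : Multigraph α β) (v : α) :
    Multigraph α β where
  verts := G.verts.erase v
  edges := G.edges.filter fun e => G.fst e ≠ v ∧ G.snd e ≠ v
  fst := G.fst
  snd := G.snd
  fst_mem := fun e he => by
    rw [Finset.mem_filter] at he
    exact Finset.mem_erase.2 ⟨he.2.1, G.fst_mem e he.1⟩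
  snd_mem := fun e he => by
    rw [Finset.mem_filter] at he
    exact Finset.mem_erase.2 ⟨he.2.2, G.snd_mem e he.1⟩

/-- Addition of a new edge `f` from `u` to `v`. -/
def Multigraph.addEdge [DecidableEq α] [DecidableEq β] (G : Multigraph α β)
    (f : β) (u v : α) : Multigraph α β where
  verts := insert u (insert v G.verts)
  edges := insert f G.edges
  fst := Function.update G.fst f u
  snd := Function.update G.snd f v
  fst_mem := fun e he => by
    by_cases hef : e = f
    · subst hef; simp
    · rw [Function.update_of_ne hef]
      have heG : e ∈ G.edges := by
        rcases Finset.mem_insert.1 he with h | h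
        · exact absurd h hef
        · exact h
      exact Finset.mem_insert_of_mem (Finset.mem_insert_of_mem (G.fst_mem e heG))
  snd_mem := fun e he => by
    by_cases hef : e = f
    · subst hef; simp
    · rw [Function.update_of_ne hef]
      have heG : e ∈ G.edges := by
        rcases Finset.mem_insert.1 he with h | h
        · exact absurd h hef
        · exact h
      exact Finset.mem_insert_of_mem (Finset.mem_insert_of_mem (G.snd_mem e heG))

/-- `(G',m')` is obtained from `(G,m)` by a gained 0-extension. -/
def IsZeroExtension [DecidableEq α] [DecidableEq β] (G : Multigraph α β) (m : β → PM)
    (G' : Multigraph α β) (m' : β → PM) : Prop :=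
  ∃ v₀ v₁ v₂ f₁ f₂, v₀ ∉ G.verts ∧ v₁ ∈ G.verts ∧ v₂ ∈ G.verts ∧
    f₁ ∉ G.edges ∧ f₂ ∉ G.edges ∧ f₁ ≠ f₂ ∧
    G'.verts = insert v₀ G.verts ∧ G'.edges = insert f₁ (insert f₂ G.edges) ∧
    (∀ e ∈ G.edges, G'.fst e = G.fst e ∧ G'.snd e = G.snd e ∧ m' e = m e) ∧
    Joins G' f₁ v₀ v₁ ∧ Joins G' f₂ v₀ v₂ ∧
    IsGainGraph G' m'

/-- `(G',m')` is obtained from `(G,m)` by a gained 1-extension. -/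
def IsOneExtension [DecidableEq α] [DecidableEq β] (G : Multigraph α β) (m : β → PM)
    (G' : Multigraph α β) (m' : β → PM) : Prop :=
  ∃ v₀ v₃ e f₁ f₂ f₃, v₀ ∉ G.verts ∧ v₃ ∈ G.verts ∧ e ∈ G.edges ∧
    f₁ ∉ G.edges.erase e ∧ f₂ ∉ G.edges.erase e ∧ f₃ ∉ G.edges.erase e ∧
    f₁ ≠ f₂ ∧ f₁ ≠ f₃ ∧ f₂ ≠ f₃ ∧
    G'.verts = insert v₀ G.verts ∧
    G'.edges = insert f₁ (insert f₂ (insert f₃ (G.edges.erase e))) ∧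
    (∀ e' ∈ G.edges.erase e, G'.fst e' = G.fst e' ∧ G'.snd e' = G.snd e' ∧ m' e' = m e') ∧
    Joins G' f₁ v₀ (G.fst e) ∧ Joins G' f₂ v₀ (G.snd e) ∧ Joins G' f₃ v₀ v₃ ∧
    (gainFrom G' m' v₀ f₁)⁻¹ * gainFrom G' m' v₀ f₂ = m e ∧
    IsGainGraph G' m'

/-- `(G',m')` is obtained from `(G,m)` by a gained loop-1-extension. -/
def IsLoopOneExtension [DecidableEq α] [DecidableEq β] (G : Multigraph α β) (m : β → PM)
    (G' : Multigraph α β) (m' : β → PM) : Prop :=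
  ∃ v₀ v₁ l f, v₀ ∉ G.verts ∧ v₁ ∈ G.verts ∧ l ∉ G.edges ∧ f ∉ G.edges ∧ l ≠ f ∧
    G'.verts = insert v₀ G.verts ∧ G'.edges = insert l (insert f G.edges) ∧
    (∀ e ∈ G.edges, G'.fst e = G.fst e ∧ G'.snd e = G.snd e ∧ m' e = m e) ∧
    G'.fst l = v₀ ∧ G'.snd l = v₀ ∧ (m' l).r = true ∧
    Joins G' f v₀ v₁ ∧ IsGainGraph G' m'

/-- A `ℤ²⋊𝒞ₛ`-tight gain graph on `K₁¹`: a single vertex with a single loop whose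
gain has non-trivial `𝒞ₛ`-component. -/
def IsTightK11 (G : Multigraph α β) (m : β → PM) : Prop :=
  ∃ v l, G.verts = {v} ∧ G.edges = {l} ∧ G.fst l = v ∧ G.snd l = v ∧ (m l).r = true

/-! Deleting `v₀` and joining `v₁v₂` by `e₁` keeps the count `|E| = 2|V| - 1`, and any subgraph `K`
of the reduction through the new edge lifts to the subgraph of `G` obtained by putting back `v₀`,
`e₂`, `e₃`, with one more vertex and two more edges. Purely periodic means admitting a `±1`-valued
potential for the `𝒞ₛ`-component of the gains; since `e₂` and `e₃` have the same `𝒞ₛ`-component, a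
potential on `K` extends to the lift, so both reductions satisfy the purely periodic condition
(and `(2,1)`-sparsity).

If both fail the balanced condition, there are balanced subgraphs `K` (gain `m(e₁)⁻¹m(e₂)`) and
`K'` (gain `m(e₁)⁻¹m(e₃)`), both through the new edge and with exactly `2|V| - 2` edges. As
`m(e₂) ≠ m(e₃)`, no walk from `v₁` to `v₂` avoids the new edge inside `K ∩ K'`, and counting
`K ∪ K'` against `(2,1)`-sparsity forces `K ∩ K'` to be the new edge alone. The two potentials then
glue along `{v₁, v₂}`, so `K ∪ K'` is purely periodic through the new edge, yet has `2|V| - 1`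
edges.
-/

open Function

namespace Multigraph

def restrict [DecidableEq α] (A : Multigraph α β) (V : Finset α) (E : Finset β) :
    Multigraph α β where
  verts := V
  edges := E.filter fun e => A.fst e ∈ V ∧ A.snd e ∈ V
  fst := A.fst
  snd := A.snd
  fst_mem _ he := (Finset.mem_filter.1 he).2.1
  snd_mem _ he := (Finset.mem_filter.1 he).2.2

@[simp] lemma restrict_verts [DecidableEq α] (A : Multigraph α β) (V : Finset α) (E : Finset β) :
    (A.restrict V E).verts = V := rfl

lemma restrict_edges_eq [DecidableEq α] {A : Multigraph α β} {V : Finset α} {E : Finset β}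
    (h : ∀ e ∈ E, A.fst e ∈ V ∧ A.snd e ∈ V) : (A.restrict V E).edges = E :=
  Finset.filter_true_of_mem h

def Reachable (G : Multigraph α β) (u v : α) : Prop := ∃ L, IsWalk G u v L

lemma card_edges_le_card_edges_deleteVertex_add_degree [DecidableEq α] (G : Multigraph α β)
    (v : α) : G.edges.card ≤ (G.deleteVertex v).edges.card + G.degree v := by
  have hsplit := Finset.card_filter_add_card_filter_not (s := G.edges)
    (fun e => G.fst e ≠ v ∧ G.snd e ≠ v)
  have hincident : (G.edges.filter fun e => ¬(G.fst e ≠ v ∧ G.snd e ≠ v)).card ≤ G.degree v := by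
    rw [Finset.card_filter]
    exact Finset.sum_le_sum fun e _ => by split_ifs <;> simp_all
  exact hsplit ▸ Nat.add_le_add_left hincident _

end Multigraph

namespace IsSubgraph

variable {A K H : Multigraph α β}

protected lemma refl (A : Multigraph α β) : IsSubgraph A A :=
  ⟨subset_rfl, subset_rfl, fun _ _ => ⟨rfl, rfl⟩⟩

lemma trans (hK : IsSubgraph K H) (hH : IsSubgraph H A) : IsSubgraph K A :=
  ⟨hK.1.trans hH.1, hK.2.1.trans hH.2.1, fun e he =>
    ⟨(hK.2.2 e he).1.trans (hH.2.2 e (hK.2.1 he)).1,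
      (hK.2.2 e he).2.trans (hH.2.2 e (hK.2.1 he)).2⟩⟩

lemma fst_eq (hK : IsSubgraph K A) {e : β} (he : e ∈ K.edges) : K.fst e = A.fst e :=
  (hK.2.2 e he).1

lemma snd_eq (hK : IsSubgraph K A) {e : β} (he : e ∈ K.edges) : K.snd e = A.snd e :=
  (hK.2.2 e he).2

lemma fst_mem (hK : IsSubgraph K A) {e : β} (he : e ∈ K.edges) : A.fst e ∈ K.verts :=
  hK.fst_eq he ▸ K.fst_mem e he

lemma snd_mem (hK : IsSubgraph K A) {e : β} (he : e ∈ K.edges) : A.snd e ∈ K.verts :=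
  hK.snd_eq he ▸ K.snd_mem e he

lemma restrict [DecidableEq α] (hK : IsSubgraph K A) {V : Finset α} {E : Finset β}
    (hV : V ⊆ K.verts) (hE : E ⊆ K.edges) : IsSubgraph (A.restrict V E) K :=
  ⟨hV, (Finset.filter_subset _ _).trans hE, fun e he =>
    ⟨(hK.fst_eq (hE (Finset.mem_of_mem_filter e he))).symm,
      (hK.snd_eq (hE (Finset.mem_of_mem_filter e he))).symm⟩⟩

lemma restrict_union_edges [DecidableEq α] [DecidableEq β] {K' : Multigraph α β}
    (hK : IsSubgraph K A) (hK' : IsSubgraph K' A) :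
    (A.restrict (K.verts ∪ K'.verts) (K.edges ∪ K'.edges)).edges = K.edges ∪ K'.edges :=
  Multigraph.restrict_edges_eq fun e he => by
    rcases Finset.mem_union.1 he with he | he
    · exact ⟨Finset.mem_union_left _ (hK.fst_mem he), Finset.mem_union_left _ (hK.snd_mem he)⟩
    · exact ⟨Finset.mem_union_right _ (hK'.fst_mem he), Finset.mem_union_right _ (hK'.snd_mem he)⟩

lemma isWalk {u v : α} {L : List (β × Bool)} (hK : IsSubgraph K A) (hL : IsWalk K u v L) :
    IsWalk A u v L := by
  induction L generalizing u with
  | nil => exact hL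
  | cons s L ih =>
    obtain ⟨he, rfl, hL⟩ := hL
    obtain ⟨e, _ | _⟩ := s <;>
      simp only [stepHead, stepTail, Bool.false_eq_true, if_true, if_false] at hL ⊢ <;>
      rw [hK.fst_eq he, hK.snd_eq he] at * <;> exact ⟨hK.2.1 he, rfl, ih hL⟩

end IsSubgraph

section Walks

variable {G : Multigraph α β} {u v w : α} {L L' : List (β × Bool)}

def revWalk (L : List (β × Bool)) : List (β × Bool) := (L.map fun s => (s.1, !s.2)).reverse

lemma isWalk_single {e : β} (he : e ∈ G.edges) : IsWalk G (G.fst e) (G.snd e) [(e, true)] :=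
  ⟨he, rfl, rfl⟩

lemma IsWalk.append (hL : IsWalk G u v L) (hL' : IsWalk G v w L') : IsWalk G u w (L ++ L') := by
  induction L generalizing u with
  | nil => cases hL; exact hL'
  | cons s L ih => exact ⟨hL.1, hL.2.1, ih hL.2.2⟩

lemma IsWalk.reverse (hL : IsWalk G u v L) : IsWalk G v u (revWalk L) := by
  induction L generalizing u with
  | nil => cases hL; rfl
  | cons s L ih =>
    obtain ⟨he, rfl, hL⟩ := hL
    simp only [revWalk, List.map_cons, List.reverse_cons] at ih ⊢
    obtain ⟨e, _ | _⟩ := s <;> exact (ih hL).append ⟨he, rfl, rfl⟩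

lemma IsWalk.edge_mem (hL : IsWalk G u v L) : ∀ s ∈ L, s.1 ∈ G.edges := by
  induction L generalizing u with
  | nil => simp
  | cons s L ih =>
    intro t ht
    rcases List.mem_cons.1 ht with rfl | ht
    exacts [hL.1, ih hL.2.2 t ht]

namespace Multigraph

lemma Reachable.refl (u : α) : G.Reachable u u := ⟨[], rfl⟩

lemma Reachable.symm : G.Reachable u v → G.Reachable v u := fun ⟨_, hL⟩ => ⟨_, hL.reverse⟩

lemma Reachable.trans : G.Reachable u v → G.Reachable v w → G.Reachable u w :=
  fun ⟨_, hL⟩ ⟨_, hL'⟩ => ⟨_, hL.append hL'⟩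

lemma reachable_fst_snd {e : β} (he : e ∈ G.edges) : G.Reachable (G.fst e) (G.snd e) :=
  ⟨_, isWalk_single he⟩

end Multigraph

end Walks

section Potentials

variable {Γ : Type} [Group Γ] {K : Multigraph α β} {u v : α} {L : List (β × Bool)}

def netGain (g : β → Γ) (L : List (β × Bool)) : Γ :=
  (L.map fun s => if s.2 then g s.1 else (g s.1)⁻¹).prod

lemma walkGain_eq_netGain (m : β → PM) (L : List (β × Bool)) : walkGain m L = netGain m L := rfl

@[simp] lemma netGain_single (g : β → Γ) (e : β) : netGain g [(e, true)] = g e := by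
  simp [netGain]

lemma netGain_append (g : β → Γ) (L L' : List (β × Bool)) :
    netGain g (L ++ L') = netGain g L * netGain g L' := by
  simp [netGain]

lemma netGain_revWalk (g : β → Γ) (L : List (β × Bool)) :
    netGain g (revWalk L) = (netGain g L)⁻¹ := by
  induction L with
  | nil => simp [netGain, revWalk]
  | cons s L ih =>
    obtain ⟨e, _ | _⟩ := s <;> simp_all [netGain, revWalk, List.prod_reverse_noncomm]

lemma netGain_congr {g g' : β → Γ} (h : ∀ s ∈ L, g s.1 = g' s.1) : netGain g L = netGain g' L := by
  simp only [netGain]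
  congr 1
  exact List.map_congr_left fun s hs => by rw [h s hs]

lemma map_netGain {Δ : Type} [Group Δ] (f : Γ →* Δ) (g : β → Γ) (L : List (β × Bool)) :
    f (netGain g L) = netGain (f ∘ g) L := by
  simp only [netGain, map_list_prod, List.map_map]
  congr 1
  exact List.map_congr_left fun ⟨e, b⟩ _ => by cases b <;> simp

lemma IsWalk.netGain_update [DecidableEq β] (hL : IsWalk K u v L) {e : β} (he : e ∉ K.edges)
    (g : β → Γ) (x : Γ) : netGain (update g e x) L = netGain g L :=
  netGain_congr fun s hs => update_of_ne (fun h => he (by rw [← h]; exact hL.edge_mem s hs)) x g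

def IsPotential (K : Multigraph α β) (g : β → Γ) (θ : α → Γ) : Prop :=
  ∀ e ∈ K.edges, g e = (θ (K.fst e))⁻¹ * θ (K.snd e)

lemma IsPotential.netGain_eq {g : β → Γ} {θ : α → Γ} (hθ : IsPotential K g θ)
    (hL : IsWalk K u v L) : netGain g L = (θ u)⁻¹ * θ v := by
  induction L generalizing u with
  | nil => cases hL; simp [netGain]
  | cons s L ih =>
    obtain ⟨he, rfl, hL⟩ := hL
    have hstep := hθ s.1 he
    obtain ⟨e, _ | _⟩ := s <;>
      simp only [netGain, List.map_cons, List.prod_cons, stepHead, stepTail] at ih hL ⊢ <;>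
      simp [ih hL, hstep, mul_assoc]

/-- Fix a root in every `Reachable`-class and take `θ u` to be the gain of a chosen walk from the
root of `u` to `u`; balance makes `θ` independent of the chosen walks. -/
lemma exists_isPotential_iff {g : β → Γ} :
    (∃ θ, IsPotential K g θ) ↔ ∀ u L, IsWalk K u u L → netGain g L = 1 := by
  refine ⟨fun ⟨θ, hθ⟩ u L hL => by simp [hθ.netGain_eq hL], fun hbal => ?_⟩
  let s : Setoid α := ⟨K.Reachable, ⟨Multigraph.Reachable.refl, .symm, .trans⟩⟩
  have hroot : ∀ u, K.Reachable (Quotient.mk s u).out u := fun u =>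
    Quotient.exact (Quotient.out_eq (Quotient.mk s u))
  choose W hW using hroot
  refine ⟨fun u => netGain g (W u), fun e he => ?_⟩
  have hsame : (Quotient.mk s (K.fst e)).out = (Quotient.mk s (K.snd e)).out :=
    congrArg Quotient.out (Quotient.sound (Multigraph.reachable_fst_snd he))
  have hclosed := hbal _ _ ((hW (K.fst e)).append
    ((isWalk_single he).append (hsame ▸ (hW (K.snd e)).reverse)))
  rw [netGain_append, netGain_append, netGain_single, netGain_revWalk, ← mul_assoc,
    mul_inv_eq_one] at hclosed
  show g e = (netGain g (W _))⁻¹ * netGain g (W _)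
  rw [← hclosed, inv_mul_cancel_left]

/-- Over a commutative group, shifting `θ'` by the constant that matches `θ` at one end of `e`
matches it at the other end too. -/
lemma IsPotential.glue {Γ : Type} [CommGroup Γ] [DecidableEq α] [DecidableEq β]
    {A K K' : Multigraph α β} {g : β → Γ} {θ θ' : α → Γ} {e : β}
    (hK : IsSubgraph K A) (hK' : IsSubgraph K' A)
    (hθ : IsPotential K g θ) (hθ' : IsPotential K' g θ') (he : e ∈ K.edges) (he' : e ∈ K'.edges)
    (hinter : K.verts ∩ K'.verts ⊆ {A.fst e, A.snd e}) :
    ∃ Θ, IsPotential (A.restrict (K.verts ∪ K'.verts) (K.edges ∪ K'.edges)) g Θ := by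
  set c := (θ' (A.fst e))⁻¹ * θ (A.fst e)
  set Θ : α → Γ := fun x => if x ∈ K.verts then θ x else θ' x * c
  have hΘ : ∀ x ∈ K.verts, Θ x = θ x := fun x hx => if_pos hx
  have hΘ' : ∀ x ∈ K'.verts, Θ x = θ' x * c := by
    intro x hx'
    by_cases hx : x ∈ K.verts
    · have hge := (hθ e he).symm.trans (hθ' e he')
      rw [hK.fst_eq he, hK.snd_eq he, hK'.fst_eq he', hK'.snd_eq he'] at hge
      rw [hΘ x hx]
      rcases Finset.mem_insert.1 (hinter (Finset.mem_inter.2 ⟨hx, hx'⟩)) with rfl | hx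
      · simp [c]
      · rw [Finset.mem_singleton.1 hx]
        calc θ (A.snd e) = θ (A.fst e) * ((θ (A.fst e))⁻¹ * θ (A.snd e)) :=
              (mul_inv_cancel_left _ _).symm
          _ = θ (A.fst e) * ((θ' (A.fst e))⁻¹ * θ' (A.snd e)) := by rw [hge]
          _ = θ' (A.snd e) * c := by
            rw [mul_comm (θ _), mul_comm (θ' _)⁻¹, mul_assoc]
    · exact if_neg hx
  refine ⟨Θ, fun f hf => ?_⟩
  change g f = (Θ (A.fst f))⁻¹ * Θ (A.snd f)
  rcases Finset.mem_union.1 (Finset.mem_of_mem_filter f hf) with hf | hf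
  · rw [hΘ _ (hK.fst_mem hf), hΘ _ (hK.snd_mem hf), hθ f hf, hK.fst_eq hf, hK.snd_eq hf]
  · rw [hΘ' _ (hK'.fst_mem hf), hΘ' _ (hK'.snd_mem hf), hθ' f hf, hK'.fst_eq hf, hK'.snd_eq hf,
      inv_mul_eq_div, inv_mul_eq_div, mul_div_mul_right_eq_div]

end Potentials

namespace PM

def sign : PM →* ℤˣ where
  toFun a := if a.r then -1 else 1
  map_one' := rfl
  map_mul' a b := by cases ha : a.r <;> cases hb : b.r <;> simp [mul_def, ha, hb]

lemma sign_eq_one_iff {a : PM} : sign a = 1 ↔ a.r = false := by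
  cases h : a.r <;> simp [sign, h]

lemma sign_congr {a b : PM} (h : a.r = b.r) : sign a = sign b := by
  simp [sign, h]

end PM

section GainConditions

variable {K H : Multigraph α β} {m : β → PM}

lemma Balanced.mono (hb : Balanced H m) (hK : IsSubgraph K H) : Balanced K m :=
  fun u _ hL => hb u _ (hK.isWalk hL)

lemma PurelyPeriodic.mono (hp : PurelyPeriodic H m) (hK : IsSubgraph K H) :
    PurelyPeriodic K m :=
  fun u _ hL => hp u _ (hK.isWalk hL)

lemma Balanced.purelyPeriodic (hb : Balanced K m) : PurelyPeriodic K m :=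
  fun u L hL => by rw [hb u L hL]; rfl

lemma Balanced.netGain_eq {u v : α} {L L' : List (β × Bool)} (hb : Balanced K m)
    (hL : IsWalk K u v L) (hL' : IsWalk K u v L') : netGain m L = netGain m L' := by
  have hclosed : netGain m (L ++ revWalk L') = 1 := hb u _ (hL.append hL'.reverse)
  rwa [netGain_append, netGain_revWalk, mul_inv_eq_one] at hclosed

lemma purelyPeriodic_iff_exists_isPotential :
    PurelyPeriodic K m ↔ ∃ θ, IsPotential K (PM.sign ∘ m) θ := by
  simp only [exists_isPotential_iff, ← map_netGain, PM.sign_eq_one_iff]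
  rfl

lemma Balanced.exists_isPotential (hb : Balanced K m) : ∃ θ, IsPotential K (PM.sign ∘ m) θ :=
  purelyPeriodic_iff_exists_isPotential.1 hb.purelyPeriodic

lemma balanced_update_iff [DecidableEq β] {e : β} (he : e ∉ K.edges) (γ : PM) :
    Balanced K (update m e γ) ↔ Balanced K m := by
  simp only [Balanced, walkGain_eq_netGain]
  exact forall₃_congr fun _ _ hL => by rw [hL.netGain_update he]

lemma purelyPeriodic_update_iff [DecidableEq β] {e : β} (he : e ∉ K.edges) (γ : PM) :
    PurelyPeriodic K (update m e γ) ↔ PurelyPeriodic K m := by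
  simp only [PurelyPeriodic, walkGain_eq_netGain]
  exact forall₃_congr fun _ _ hL => by rw [hL.netGain_update he]

end GainConditions

section Sparsity

lemma exists_dense_balanced_of_not_forall {A : Multigraph α β} {m : β → PM}
    (h : ¬ ∀ H, IsSubgraph H A → Balanced H m → Sparse 2 3 H) :
    ∃ K, IsSubgraph K A ∧ Balanced K m ∧ 1 ≤ K.edges.card ∧
      2 * (K.verts.card : ℤ) - 3 < K.edges.card := by
  simp only [Sparse, not_forall, not_le, exists_prop] at h
  obtain ⟨H, hH, hb, K, hKH, hK, hdense⟩ := h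
  exact ⟨K, hKH.trans hH, hb.mono hKH, hK, by exact_mod_cast hdense⟩

lemma Sparse.card_edges_le_or {B C : Multigraph α β} (hB : Sparse 2 3 B) (hC : IsSubgraph C B) :
    (C.edges.card : ℤ) ≤ 2 * C.verts.card - 3 ∨ (C.edges = ∅ ∧ C.verts.card ≤ 1) := by
  rcases C.edges.eq_empty_or_nonempty with hE | hE
  · by_cases hV : C.verts.card ≤ 1
    · exact Or.inr ⟨hE, hV⟩
    · left; simp only [hE, Finset.card_empty, Nat.cast_zero]; omega
  · left; exact_mod_cast hB C hC (Finset.card_pos.2 hE)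

lemma card_edges_restrict_filter_add [DecidableEq α] (B : Multigraph α β) (p : α → Prop)
    [DecidablePred p] (hp : ∀ e ∈ B.edges, p (B.fst e) ↔ p (B.snd e)) :
    (B.restrict (B.verts.filter p) B.edges).edges.card +
      (B.restrict (B.verts.filter (¬ p ·)) B.edges).edges.card = B.edges.card := by
  rw [← Finset.card_filter_add_card_filter_not (s := B.edges) (p ∘ B.fst)]
  congr 2 <;> refine Finset.filter_congr fun e he => ?_ <;>
    simp [B.fst_mem e he, B.snd_mem e he, hp e he]

/-- No edge joins the vertices reachable from `u` to the others, and each of these two sides has at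
most `2n - 2` edges on its `n` vertices, with equality only for a single isolated vertex. -/
lemma Sparse.eq_pair_of_not_reachable [DecidableEq α] {B : Multigraph α β} (hB : Sparse 2 3 B)
    {u v : α} (hu : u ∈ B.verts) (hv : v ∈ B.verts) (huv : ¬ B.Reachable u v)
    (hdense : 2 * (B.verts.card : ℤ) - 4 ≤ B.edges.card) : B.verts = {u, v} ∧ B.edges = ∅ := by
  classical
  set S := B.verts.filter (B.Reachable u)
  set T := B.verts.filter (¬ B.Reachable u ·)
  have huS : u ∈ S := Finset.mem_filter.2 ⟨hu, .refl u⟩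
  have hvT : v ∈ T := Finset.mem_filter.2 ⟨hv, huv⟩
  have hV : S.card + T.card = B.verts.card := Finset.card_filter_add_card_filter_not (B.Reachable u)
  have hE := card_edges_restrict_filter_add B (B.Reachable u) fun e he =>
    ⟨fun h => h.trans (B.reachable_fst_snd he), fun h => h.trans (B.reachable_fst_snd he).symm⟩
  have hS := hB.card_edges_le_or (C := B.restrict S B.edges)
    ((IsSubgraph.refl B).restrict (Finset.filter_subset _ _) subset_rfl)
  have hT := hB.card_edges_le_or (C := B.restrict T B.edges)
    ((IsSubgraph.refl B).restrict (Finset.filter_subset _ _) subset_rfl)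
  have hS1 := Finset.card_pos.2 ⟨u, huS⟩
  have hT1 := Finset.card_pos.2 ⟨v, hvT⟩
  have hVZ : (S.card : ℤ) + T.card = B.verts.card := by exact_mod_cast hV
  have hEZ : ((B.restrict S B.edges).edges.card : ℤ) + (B.restrict T B.edges).edges.card =
      B.edges.card := by exact_mod_cast hE
  simp only [Multigraph.restrict_verts] at hS hT
  rcases hS with hS | ⟨hSE, hSV⟩ <;> rcases hT with hT | ⟨hTE, hTV⟩
  · linarith
  · rw [hTE, Finset.card_empty] at hEZ; omega
  · rw [hSE, Finset.card_empty] at hEZ; omega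
  · rw [hSE, hTE, Finset.card_empty] at hE
    refine ⟨?_, Finset.card_eq_zero.1 hE.symm⟩
    have hSu : S = {u} := Finset.eq_singleton_iff_unique_mem.2
      ⟨huS, fun x hx => Finset.card_le_one.1 hSV x hx u huS⟩
    have hTv : T = {v} := Finset.eq_singleton_iff_unique_mem.2
      ⟨hvT, fun x hx => Finset.card_le_one.1 hTV x hx v hvT⟩
    have hST : S ∪ T = B.verts := Finset.filter_union_filter_not_eq _ _
    rw [← hST, hSu, hTv, Finset.insert_eq]

end Sparsity

structure IsFan (G : Multigraph α β) (v₀ v₁ v₂ : α) (e₁ e₂ e₃ : β) : Prop where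
  ne₀₁ : v₁ ≠ v₀
  ne₀₂ : v₂ ≠ v₀
  ne₁₂ : v₁ ≠ v₂
  mem₀ : v₀ ∈ G.verts
  ne_e₁₂ : e₁ ≠ e₂
  ne_e₁₃ : e₁ ≠ e₃
  ne_e₂₃ : e₂ ≠ e₃
  mem₁ : e₁ ∈ G.edges
  mem₂ : e₂ ∈ G.edges
  mem₃ : e₃ ∈ G.edges
  fst₁ : G.fst e₁ = v₀
  snd₁ : G.snd e₁ = v₁
  fst₂ : G.fst e₂ = v₀
  snd₂ : G.snd e₂ = v₂
  fst₃ : G.fst e₃ = v₀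
  snd₃ : G.snd e₃ = v₂

/-- The ends are read in `G`, so `e₁` becomes `v₀v₁` again. -/
def fanLift [DecidableEq α] [DecidableEq β] (G : Multigraph α β) (v₀ : α) (e₂ e₃ : β)
    (K : Multigraph α β) : Multigraph α β :=
  G.restrict (insert v₀ K.verts) (insert e₂ (insert e₃ K.edges))

namespace IsFan

variable [DecidableEq α] [DecidableEq β] {G K : Multigraph α β} {m : β → PM} {v₀ v₁ v₂ : α}
  {e₁ e₂ e₃ : β}

lemma verts_reduction (hF : IsFan G v₀ v₁ v₂ e₁ e₂ e₃) :
    ((G.deleteVertex v₀).addEdge e₁ v₁ v₂).verts = G.verts.erase v₀ := by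
  have hv₁ : v₁ ∈ G.verts.erase v₀ :=
    Finset.mem_erase.2 ⟨hF.ne₀₁, hF.snd₁ ▸ G.snd_mem _ hF.mem₁⟩
  have hv₂ : v₂ ∈ G.verts.erase v₀ :=
    Finset.mem_erase.2 ⟨hF.ne₀₂, hF.snd₂ ▸ G.snd_mem _ hF.mem₂⟩
  simp only [Multigraph.addEdge, Multigraph.deleteVertex, Finset.insert_eq_of_mem hv₁,
    Finset.insert_eq_of_mem hv₂]

lemma not_mem_verts_of_isSubgraph (hF : IsFan G v₀ v₁ v₂ e₁ e₂ e₃)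
    (hK : IsSubgraph K ((G.deleteVertex v₀).addEdge e₁ v₁ v₂)) : v₀ ∉ K.verts := fun h => by
  simpa [hF.verts_reduction] using hK.1 h

lemma mem_edges_reduction {e : β} :
    e ∈ ((G.deleteVertex v₀).addEdge e₁ v₁ v₂).edges ↔
      e = e₁ ∨ e ∈ G.edges ∧ G.fst e ≠ v₀ ∧ G.snd e ≠ v₀ := by
  simp [Multigraph.addEdge, Multigraph.deleteVertex]

lemma edges_reduction_subset (hF : IsFan G v₀ v₁ v₂ e₁ e₂ e₃) :
    ((G.deleteVertex v₀).addEdge e₁ v₁ v₂).edges ⊆ G.edges := fun e he => by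
  rcases mem_edges_reduction.1 he with rfl | he
  exacts [hF.mem₁, he.1]

lemma card_edges_reduction (hF : IsFan G v₀ v₁ v₂ e₁ e₂ e₃) (hdeg : G.degree v₀ = 3) :
    ((G.deleteVertex v₀).addEdge e₁ v₁ v₂).edges.card + 2 = G.edges.card := by
  have hdel : (G.deleteVertex v₀).edges ⊆ G.edges \ {e₁, e₂, e₃} := fun e he => by
    simp only [Multigraph.deleteVertex, Finset.mem_filter] at he
    simp only [Finset.mem_sdiff, Finset.mem_insert, Finset.mem_singleton]
    refine ⟨he.1, ?_⟩
    rintro (rfl | rfl | rfl)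
    exacts [he.2.1 hF.fst₁, he.2.1 hF.fst₂, he.2.1 hF.fst₃]
  have hfan : ({e₁, e₂, e₃} : Finset β) ⊆ G.edges := by
    simp [Finset.insert_subset_iff, hF.mem₁, hF.mem₂, hF.mem₃]
  have h3 : ({e₁, e₂, e₃} : Finset β).card = 3 := by
    rw [Finset.card_insert_of_notMem (by simp [hF.ne_e₁₂, hF.ne_e₁₃]),
      Finset.card_pair hF.ne_e₂₃]
  have hle := Finset.card_le_card hdel
  have h3le := Finset.card_le_card hfan
  rw [Finset.card_sdiff_of_subset hfan, h3] at hle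
  rw [h3] at h3le
  have hge := G.card_edges_le_card_edges_deleteVertex_add_degree v₀
  have he₁ : e₁ ∉ (G.deleteVertex v₀).edges := fun h => (Finset.mem_filter.1 h).2.1 hF.fst₁
  change (insert e₁ (G.deleteVertex v₀).edges).card + 2 = _
  rw [Finset.card_insert_of_notMem he₁]
  omega

lemma ends_of_ne (hK : IsSubgraph K ((G.deleteVertex v₀).addEdge e₁ v₁ v₂)) {e : β}
    (he : e ∈ K.edges) (hne : e ≠ e₁) : K.fst e = G.fst e ∧ K.snd e = G.snd e := by
  rw [hK.fst_eq he, hK.snd_eq he]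
  exact ⟨update_of_ne hne _ _, update_of_ne hne _ _⟩

lemma isSubgraph_of_not_mem (hF : IsFan G v₀ v₁ v₂ e₁ e₂ e₃)
    (hK : IsSubgraph K ((G.deleteVertex v₀).addEdge e₁ v₁ v₂)) (he₁ : e₁ ∉ K.edges) :
    IsSubgraph K G := by
  refine ⟨hK.1.trans (hF.verts_reduction ▸ Finset.erase_subset _ _),
    hK.2.1.trans hF.edges_reduction_subset, fun e he => ends_of_ne hK he ?_⟩
  rintro rfl
  exact he₁ he

lemma ends_of_mem (hK : IsSubgraph K ((G.deleteVertex v₀).addEdge e₁ v₁ v₂))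
    (he₁ : e₁ ∈ K.edges) : K.fst e₁ = v₁ ∧ K.snd e₁ = v₂ := by
  rw [hK.fst_eq he₁, hK.snd_eq he₁]
  simp [Multigraph.addEdge]

lemma mem_verts_of_mem (hK : IsSubgraph K ((G.deleteVertex v₀).addEdge e₁ v₁ v₂))
    (he₁ : e₁ ∈ K.edges) : v₁ ∈ K.verts ∧ v₂ ∈ K.verts :=
  ⟨(ends_of_mem hK he₁).1 ▸ K.fst_mem e₁ he₁, (ends_of_mem hK he₁).2 ▸ K.snd_mem e₁ he₁⟩

lemma fanLift_isSubgraph (hF : IsFan G v₀ v₁ v₂ e₁ e₂ e₃)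
    (hK : IsSubgraph K ((G.deleteVertex v₀).addEdge e₁ v₁ v₂)) :
    IsSubgraph (fanLift G v₀ e₂ e₃ K) G := by
  refine (IsSubgraph.refl G).restrict (Finset.insert_subset hF.mem₀ ?_)
    (Finset.insert_subset hF.mem₂ (Finset.insert_subset hF.mem₃
      (hK.2.1.trans hF.edges_reduction_subset)))
  exact hK.1.trans (hF.verts_reduction ▸ Finset.erase_subset _ _)

lemma card_fanLift (hF : IsFan G v₀ v₁ v₂ e₁ e₂ e₃)
    (hK : IsSubgraph K ((G.deleteVertex v₀).addEdge e₁ v₁ v₂)) (he₁ : e₁ ∈ K.edges) :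
    (fanLift G v₀ e₂ e₃ K).edges.card = K.edges.card + 2 ∧
      (fanLift G v₀ e₂ e₃ K).verts.card = K.verts.card + 1 := by
  obtain ⟨hv₁, hv₂⟩ := mem_verts_of_mem hK he₁
  have hends : ∀ e ∈ insert e₂ (insert e₃ K.edges),
      G.fst e ∈ insert v₀ K.verts ∧ G.snd e ∈ insert v₀ K.verts := by
    intro e he
    simp only [Finset.mem_insert] at he ⊢
    rcases he with rfl | rfl | he
    · exact ⟨.inl hF.fst₂, .inr (hF.snd₂ ▸ hv₂)⟩
    · exact ⟨.inl hF.fst₃, .inr (hF.snd₃ ▸ hv₂)⟩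
    by_cases h : e = e₁
    · subst h; exact ⟨.inl hF.fst₁, .inr (hF.snd₁ ▸ hv₁)⟩
    · obtain ⟨hf, hs⟩ := ends_of_ne hK he h
      exact ⟨.inr (hf ▸ K.fst_mem e he), .inr (hs ▸ K.snd_mem e he)⟩
  have hnot : ∀ e, G.fst e = v₀ → e ≠ e₁ → e ∉ K.edges := fun e he hne h => by
    rcases mem_edges_reduction.1 (hK.2.1 h) with h | h
    exacts [hne h, h.2.1 he]
  rw [fanLift, Multigraph.restrict_edges_eq hends, Multigraph.restrict_verts,
    Finset.card_insert_of_notMem (hF.not_mem_verts_of_isSubgraph hK), Finset.card_insert_of_notMem,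
    Finset.card_insert_of_notMem (hnot e₃ hF.fst₃ hF.ne_e₁₃.symm)]
  · exact ⟨rfl, rfl⟩
  · simp [hF.ne_e₂₃, hnot e₂ hF.fst₂ hF.ne_e₁₂.symm]

/-- The potential at `v₀` is chosen so that `e₁` keeps its gain; then `e₂` and `e₃` get theirs
because the new edge carries `g(e₁)⁻¹ g(e₂) = g(e₁)⁻¹ g(e₃)`. -/
lemma isPotential_fanLift {Γ : Type} [CommGroup Γ] (hF : IsFan G v₀ v₁ v₂ e₁ e₂ e₃) {g : β → Γ}
    (h₂₃ : g e₂ = g e₃) (hK : IsSubgraph K ((G.deleteVertex v₀).addEdge e₁ v₁ v₂))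
    (he₁ : e₁ ∈ K.edges) {θ : α → Γ} (hθ : IsPotential K (update g e₁ ((g e₁)⁻¹ * g e₂)) θ) :
    IsPotential (fanLift G v₀ e₂ e₃ K) g (update θ v₀ (θ v₁ * (g e₁)⁻¹)) := by
  obtain ⟨hfst, hsnd⟩ := ends_of_mem hK he₁
  obtain ⟨hv₁, hv₂⟩ := mem_verts_of_mem hK he₁
  have hv₀ := hF.not_mem_verts_of_isSubgraph hK
  have hθK : ∀ x ∈ K.verts, update θ v₀ (θ v₁ * (g e₁)⁻¹) x = θ x := fun x hx =>
    update_of_ne (fun (h : x = v₀) => hv₀ (h ▸ hx)) _ _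
  have hrel : (θ v₁)⁻¹ * θ v₂ = (g e₁)⁻¹ * g e₂ := by
    simpa [hfst, hsnd] using (hθ e₁ he₁).symm
  have hnew : g e₂ = (θ v₁ * (g e₁)⁻¹)⁻¹ * θ v₂ := by
    rw [mul_inv_rev, inv_inv, mul_assoc, hrel, mul_inv_cancel_left]
  intro e he
  change g e = (update θ v₀ _ (G.fst e))⁻¹ * update θ v₀ _ (G.snd e)
  simp only [fanLift, Multigraph.restrict, Finset.mem_filter, Finset.mem_insert] at he
  rcases he.1 with rfl | rfl | he
  · rw [hF.fst₂, hF.snd₂, update_self, hθK _ hv₂, hnew]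
  · rw [hF.fst₃, hF.snd₃, update_self, hθK _ hv₂, ← h₂₃, hnew]
  by_cases hne : e = e₁
  · subst hne
    rw [hF.fst₁, hF.snd₁, update_self, hθK _ hv₁, mul_inv_rev, inv_inv, inv_mul_cancel_right]
  · obtain ⟨hf, hs⟩ := ends_of_ne hK he hne
    rw [← hf, ← hs, hθK _ (K.fst_mem e he), hθK _ (K.snd_mem e he), ← hθ e he,
      update_of_ne hne]

lemma sparse_reduction (hF : IsFan G v₀ v₁ v₂ e₁ e₂ e₃) (hG : Sparse 2 1 G) :
    Sparse 2 1 ((G.deleteVertex v₀).addEdge e₁ v₁ v₂) := by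
  intro K hK hK1
  by_cases he₁ : e₁ ∈ K.edges
  · obtain ⟨hE, hV⟩ := hF.card_fanLift hK he₁
    have hlift := hG _ (hF.fanLift_isSubgraph hK) (by omega)
    rw [hE, hV] at hlift
    push_cast at hlift ⊢
    linarith
  · exact hG K (hF.isSubgraph_of_not_mem hK he₁) hK1

lemma tight_reduction (hF : IsFan G v₀ v₁ v₂ e₁ e₂ e₃) (hG : Tight 2 1 G)
    (hdeg : G.degree v₀ = 3) : Tight 2 1 ((G.deleteVertex v₀).addEdge e₁ v₁ v₂) := by
  refine ⟨hF.sparse_reduction hG.1, ?_⟩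
  have hE := hF.card_edges_reduction hdeg
  have hV := Finset.card_erase_add_one hF.mem₀
  rw [← hF.verts_reduction] at hV
  have hcount := hG.2
  push_cast at hcount ⊢
  omega

lemma card_edges_le_of_isPotential (hF : IsFan G v₀ v₁ v₂ e₁ e₂ e₃) (hT : PMTight G m)
    (hr : (m e₂).r = (m e₃).r) (hK : IsSubgraph K ((G.deleteVertex v₀).addEdge e₁ v₁ v₂))
    (he₁ : e₁ ∈ K.edges) {θ : α → ℤˣ}
    (hθ : IsPotential K (update (PM.sign ∘ m) e₁ ((PM.sign (m e₁))⁻¹ * PM.sign (m e₂))) θ) :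
    (K.edges.card : ℤ) ≤ 2 * K.verts.card - 2 := by
  have hpp : PurelyPeriodic (fanLift G v₀ e₂ e₃ K) m :=
    purelyPeriodic_iff_exists_isPotential.2
      ⟨_, hF.isPotential_fanLift (g := PM.sign ∘ m) (PM.sign_congr hr) hK he₁ hθ⟩
  obtain ⟨hE, hV⟩ := hF.card_fanLift hK he₁
  have hlift := hT.2.1 _ (hF.fanLift_isSubgraph hK) hpp _ (.refl _) (by omega)
  rw [hE, hV] at hlift
  push_cast at hlift
  linarith

lemma sparse_of_purelyPeriodic (hF : IsFan G v₀ v₁ v₂ e₁ e₂ e₃) (hT : PMTight G m)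
    (hr : (m e₂).r = (m e₃).r) {γ : PM} (hγ : PM.sign γ = (PM.sign (m e₁))⁻¹ * PM.sign (m e₂))
    {H : Multigraph α β} (hH : IsSubgraph H ((G.deleteVertex v₀).addEdge e₁ v₁ v₂))
    (hpp : PurelyPeriodic H (update m e₁ γ)) : Sparse 2 2 H := by
  intro K hKH hK1
  have hK := hKH.trans hH
  have hppK := hpp.mono hKH
  by_cases he₁ : e₁ ∈ K.edges
  · obtain ⟨θ, hθ⟩ := purelyPeriodic_iff_exists_isPotential.1 hppK
    rw [comp_update, hγ] at hθ
    exact_mod_cast hF.card_edges_le_of_isPotential hT hr hK he₁ hθ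
  · exact hT.2.1 K (hF.isSubgraph_of_not_mem hK he₁) ((purelyPeriodic_update_iff he₁ γ).1 hppK)
      K (.refl K) hK1

lemma mem_of_dense_balanced (hF : IsFan G v₀ v₁ v₂ e₁ e₂ e₃) (hT : PMTight G m)
    (hK : IsSubgraph K ((G.deleteVertex v₀).addEdge e₁ v₁ v₂)) {γ : PM}
    (hb : Balanced K (update m e₁ γ)) (hK1 : 1 ≤ K.edges.card)
    (hdense : 2 * (K.verts.card : ℤ) - 3 < K.edges.card) : e₁ ∈ K.edges := by
  by_contra he₁
  have hsparse := hT.2.2 K (hF.isSubgraph_of_not_mem hK he₁) ((balanced_update_iff he₁ γ).1 hb)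
    K (.refl K) hK1
  push_cast at hsparse
  linarith

lemma netGain_eq_of_balanced (hK : IsSubgraph K ((G.deleteVertex v₀).addEdge e₁ v₁ v₂))
    (he₁ : e₁ ∈ K.edges) {γ : PM} (hb : Balanced K (update m e₁ γ)) {B : Multigraph α β}
    (hBK : IsSubgraph B K) (he₁B : e₁ ∉ B.edges) {W : List (β × Bool)} (hW : IsWalk B v₁ v₂ W) :
    netGain m W = γ := by
  obtain ⟨hfst, hsnd⟩ := ends_of_mem hK he₁
  have h := hb.netGain_eq (hBK.isWalk hW) (hfst ▸ hsnd ▸ isWalk_single he₁)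
  rwa [hW.netGain_update he₁B, netGain_single, update_self] at h

/-- A walk from `v₁` to `v₂` avoiding `e₁` in `K ∩ K'` would have gain both `m(e₁)⁻¹m(e₂)` and
`m(e₁)⁻¹m(e₃)`, so the two sides of the new edge are separated there. -/
lemma inter_eq_of_balanced (hF : IsFan G v₀ v₁ v₂ e₁ e₂ e₃) (hT : PMTight G m) (hne : m e₂ ≠ m e₃)
    {K' : Multigraph α β} (hK : IsSubgraph K ((G.deleteVertex v₀).addEdge e₁ v₁ v₂))
    (hK' : IsSubgraph K' ((G.deleteVertex v₀).addEdge e₁ v₁ v₂))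
    (he₁ : e₁ ∈ K.edges) (he₁' : e₁ ∈ K'.edges)
    (hb : Balanced K (update m e₁ ((m e₁)⁻¹ * m e₂)))
    (hb' : Balanced K' (update m e₁ ((m e₁)⁻¹ * m e₃)))
    (hdense : 2 * ((K.verts ∩ K'.verts).card : ℤ) - 3 ≤ (K.edges ∩ K'.edges).card) :
    K.verts ∩ K'.verts = {v₁, v₂} ∧ K.edges ∩ K'.edges = {e₁} := by
  set B := ((G.deleteVertex v₀).addEdge e₁ v₁ v₂).restrict (K.verts ∩ K'.verts)
    ((K.edges ∩ K'.edges).erase e₁)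
  have hBK : IsSubgraph B K := hK.restrict Finset.inter_subset_left
    ((Finset.erase_subset _ _).trans Finset.inter_subset_left)
  have hBK' : IsSubgraph B K' := hK'.restrict Finset.inter_subset_right
    ((Finset.erase_subset _ _).trans Finset.inter_subset_right)
  have hBE : B.edges = (K.edges ∩ K'.edges).erase e₁ := Multigraph.restrict_edges_eq fun e he => by
    obtain ⟨heK, heK'⟩ := Finset.mem_inter.1 (Finset.mem_of_mem_erase he)
    exact ⟨Finset.mem_inter.2 ⟨hK.fst_mem heK, hK'.fst_mem heK'⟩,
      Finset.mem_inter.2 ⟨hK.snd_mem heK, hK'.snd_mem heK'⟩⟩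
  have he₁B : e₁ ∉ B.edges := hBE ▸ Finset.notMem_erase _ _
  have hBsparse : Sparse 2 3 B := hT.2.2 B (hF.isSubgraph_of_not_mem (hBK.trans hK) he₁B)
    ((balanced_update_iff he₁B _).1 (hb.mono hBK))
  have hnr : ¬ B.Reachable v₁ v₂ := fun ⟨W, hW⟩ =>
    hne (mul_left_cancel ((netGain_eq_of_balanced hK he₁ hb hBK he₁B hW).symm.trans
      (netGain_eq_of_balanced hK' he₁' hb' hBK' he₁B hW)))
  obtain ⟨hv₁, hv₂⟩ := mem_verts_of_mem hK he₁
  obtain ⟨hv₁', hv₂'⟩ := mem_verts_of_mem hK' he₁'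
  have he₁KK' := Finset.mem_inter.2 ⟨he₁, he₁'⟩
  have hcard := Finset.card_erase_add_one he₁KK'
  obtain ⟨hV, hE⟩ := hBsparse.eq_pair_of_not_reachable (Finset.mem_inter.2 ⟨hv₁, hv₁'⟩)
    (Finset.mem_inter.2 ⟨hv₂, hv₂'⟩) hnr (by rw [hBE, Multigraph.restrict_verts]; omega)
  rw [hBE, Finset.erase_eq_empty_iff] at hE
  exact ⟨hV, hE.resolve_left (Finset.ne_empty_of_mem he₁KK')⟩

lemma false_of_dense_balanced (hF : IsFan G v₀ v₁ v₂ e₁ e₂ e₃) (hT : PMTight G m)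
    (hr : (m e₂).r = (m e₃).r) (hne : m e₂ ≠ m e₃) {K' : Multigraph α β}
    (hK : IsSubgraph K ((G.deleteVertex v₀).addEdge e₁ v₁ v₂))
    (hK' : IsSubgraph K' ((G.deleteVertex v₀).addEdge e₁ v₁ v₂))
    (hb : Balanced K (update m e₁ ((m e₁)⁻¹ * m e₂)))
    (hb' : Balanced K' (update m e₁ ((m e₁)⁻¹ * m e₃)))
    (hK1 : 1 ≤ K.edges.card) (hK1' : 1 ≤ K'.edges.card)
    (hdense : 2 * (K.verts.card : ℤ) - 3 < K.edges.card)
    (hdense' : 2 * (K'.verts.card : ℤ) - 3 < K'.edges.card) : False := by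
  have he₁ := hF.mem_of_dense_balanced hT hK hb hK1 hdense
  have he₁' := hF.mem_of_dense_balanced hT hK' hb' hK1' hdense'
  obtain ⟨θ, hθ⟩ := hb.exists_isPotential
  obtain ⟨θ', hθ'⟩ := hb'.exists_isPotential
  rw [comp_update, map_mul, map_inv] at hθ hθ'
  rw [← PM.sign_congr hr] at hθ'
  have hKc := hF.card_edges_le_of_isPotential hT hr hK he₁ hθ
  have hK'c := hF.card_edges_le_of_isPotential hT hr hK' he₁' hθ'
  set U := ((G.deleteVertex v₀).addEdge e₁ v₁ v₂).restrict (K.verts ∪ K'.verts)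
    (K.edges ∪ K'.edges)
  have hU : IsSubgraph U ((G.deleteVertex v₀).addEdge e₁ v₁ v₂) := (IsSubgraph.refl _).restrict
    (Finset.union_subset hK.1 hK'.1) (Finset.union_subset hK.2.1 hK'.2.1)
  have hUE : U.edges = K.edges ∪ K'.edges := hK.restrict_union_edges hK'
  have he₁U : e₁ ∈ U.edges := hUE ▸ Finset.mem_union_left _ he₁
  have hUc := hF.sparse_reduction hT.1.1 U hU (Finset.card_pos.2 ⟨e₁, he₁U⟩)
  rw [hUE, Multigraph.restrict_verts] at hUc
  have hcE := Finset.card_union_add_card_inter K.edges K'.edges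
  have hcV := Finset.card_union_add_card_inter K.verts K'.verts
  push_cast at hUc
  obtain ⟨hV, hE⟩ := hF.inter_eq_of_balanced hT hne hK hK' he₁ he₁' hb hb' (by omega)
  obtain ⟨Θ, hΘ⟩ := IsPotential.glue hK hK' hθ hθ' he₁ he₁'
    (by rw [hV]; simp [Multigraph.addEdge])
  have hUc' := hF.card_edges_le_of_isPotential hT hr hU he₁U hΘ
  rw [hUE, Multigraph.restrict_verts] at hUc'
  rw [hV, Finset.card_pair hF.ne₁₂] at hcV
  rw [hE, Finset.card_singleton] at hcE
  omega

end IsFan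

/-- If the two parallel edges at a degree-3 vertex with two
neighbours have the same `𝒞ₛ`-component, then one of the two non-loop
1-reductions preserves `ℤ²⋊𝒞ₛ`-tightness. -/
theorem sameCs_twoNeighbour_reduction {α β : Type} [DecidableEq α] [DecidableEq β]
    (G : Multigraph α β) (m : β → PM) (hGm : IsGainGraph G m) (hT : PMTight G m)
    (v₀ v₁ v₂ : α) (h01 : v₁ ≠ v₀) (h02 : v₂ ≠ v₀) (h12 : v₁ ≠ v₂)
    (hv₀ : v₀ ∈ G.verts) (hdeg : G.degree v₀ = 3)
    (e₁ e₂ e₃ : β) (he12 : e₁ ≠ e₂) (he13 : e₁ ≠ e₃) (he23 : e₂ ≠ e₃)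
    (hm₁ : e₁ ∈ G.edges) (hm₂ : e₂ ∈ G.edges) (hm₃ : e₃ ∈ G.edges)
    (hf₁ : G.fst e₁ = v₀) (hs₁ : G.snd e₁ = v₁)
    (hf₂ : G.fst e₂ = v₀) (hs₂ : G.snd e₂ = v₂)
    (hf₃ : G.fst e₃ = v₀) (hs₃ : G.snd e₃ = v₂)
    (hr : (m e₂).r = (m e₃).r) :
    PMTight ((G.deleteVertex v₀).addEdge e₁ v₁ v₂)
        (Function.update m e₁ ((m e₁)⁻¹ * m e₂)) ∨
      PMTight ((G.deleteVertex v₀).addEdge e₁ v₁ v₂)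
        (Function.update m e₁ ((m e₁)⁻¹ * m e₃)) := by
  have hF : IsFan G v₀ v₁ v₂ e₁ e₂ e₃ :=
    ⟨h01, h02, h12, hv₀, he12, he13, he23, hm₁, hm₂, hm₃, hf₁, hs₁, hf₂, hs₂, hf₃, hs₃⟩
  have hne : m e₂ ≠ m e₃ :=
    hGm.parallel_ne e₂ hm₂ e₃ hm₃ he23 (hf₂.trans hf₃.symm) (hs₂.trans hs₃.symm)
  have htight := hF.tight_reduction hT.1 hdeg
  have hpp₂ := fun H => hF.sparse_of_purelyPeriodic (H := H) (γ := (m e₁)⁻¹ * m e₂) hT hr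
    (by rw [map_mul, map_inv])
  have hpp₃ := fun H => hF.sparse_of_purelyPeriodic (H := H) (γ := (m e₁)⁻¹ * m e₃) hT hr
    (by rw [map_mul, map_inv, PM.sign_congr hr])
  by_contra! h
  obtain ⟨K, hK, hb, hK1, hdense⟩ :=
    exists_dense_balanced_of_not_forall fun hbal => h.1 ⟨htight, hpp₂, hbal⟩
  obtain ⟨K', hK', hb', hK1', hdense'⟩ :=
    exists_dense_balanced_of_not_forall fun hbal => h.2 ⟨htight, hpp₃, hbal⟩
  exact hF.false_of_dense_balanced hT hr hne hK hK' hb hb' hK1 hK1' hdense hdense'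

end Crystal
end

section
/- Suppose that (G,m) is a ℤ²⋊Cs-tight gain graph that has a vertex v₀ of degree 3 with incident edges e₁=(v₀,v₁;m(e₁)), e₂=(v₀,v₂;m(e₂)) and e₃=(v₀,v₂;m(e₃)) (all oriented away from v₀), where v₁,v₂ are distinct vertices different from v₀, such that m(e₂) and m(e₃) have different Cs-components. Let G−v₀+e₂₃ be the gain graph obtained by deleting v₀ with its incident edges and adding the loop e₂₃=(v₂,v₂;m(e₂)⁻¹m(e₃)). If G−v₀+e₂₃ is (2,1)-tight, then G−v₀+e₂₃ is ℤ²⋊Cs-tight. -/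
namespace Crystal

variable {α β : Type}

/-
A loop whose gain has non-trivial reflection component is a closed walk of non-translational
gain, so a purely periodic (in particular a balanced) subgraph of `G - v₀ + e₂₃` cannot contain the
new loop `e₂₃`. Such a subgraph is therefore a subgraph of `G` on which the two gain maps agree,
and the sparsity counts it inherits from `G` are exactly conditions (2) and (3).
-/

@[simp] lemma PM.r_mul (a b : PM) : (a * b).r = xor a.r b.r := rfl

@[simp] lemma PM.r_inv (a : PM) : a⁻¹.r = a.r := rfl

lemma IsWalk.mem_edges {G : Multigraph α β} :
    ∀ {u v : α} {L : List (β × Bool)}, IsWalk G u v L → ∀ s ∈ L, s.1 ∈ G.edges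
  | _, _, [], _, _, hs => absurd hs List.not_mem_nil
  | _, _, _ :: _, hw, _, hs => by
    rcases List.mem_cons.1 hs with rfl | hs
    · exact hw.1
    · exact IsWalk.mem_edges hw.2.2 _ hs

lemma IsWalk.walkGain_congr {G : Multigraph α β} {u v : α} {L : List (β × Bool)}
    (hw : IsWalk G u v L) {m m' : β → PM} (h : ∀ e ∈ G.edges, m e = m' e) :
    walkGain m L = walkGain m' L := by
  unfold walkGain
  congr 1
  exact List.map_congr_left fun s hs => by rw [h s.1 (hw.mem_edges s hs)]

lemma PurelyPeriodic.congr {G : Multigraph α β} {m m' : β → PM} (hG : PurelyPeriodic G m)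
    (h : ∀ e ∈ G.edges, m e = m' e) : PurelyPeriodic G m' :=
  fun u L hw => hw.walkGain_congr h ▸ hG u L hw

lemma Balanced.congr {G : Multigraph α β} {m m' : β → PM} (hG : Balanced G m)
    (h : ∀ e ∈ G.edges, m e = m' e) : Balanced G m' :=
  fun u L hw => hw.walkGain_congr h ▸ hG u L hw

lemma Balanced.purelyPeriodic_s13 {G : Multigraph α β} {m : β → PM} (hG : Balanced G m) :
    PurelyPeriodic G m :=
  fun u L hw => by rw [hG u L hw]; rfl

lemma PurelyPeriodic.r_eq_false_of_loop {G : Multigraph α β} {m : β → PM}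
    (hG : PurelyPeriodic G m) {e : β} (he : e ∈ G.edges) (hloop : G.fst e = G.snd e) :
    (m e).r = false := by
  have hw : IsWalk G (G.fst e) (G.fst e) [(e, true)] :=
    ⟨he, rfl, by simp [IsWalk, stepTail, hloop]⟩
  simpa [walkGain] using hG _ _ hw

lemma Multigraph.deleteVertex_isSubgraph [DecidableEq α] (G : Multigraph α β) (v : α) :
    IsSubgraph (G.deleteVertex v) G :=
  ⟨Finset.erase_subset v G.verts, Finset.filter_subset _ G.edges, fun _ _ => ⟨rfl, rfl⟩⟩

lemma IsSubgraph.of_addEdge [DecidableEq α] [DecidableEq β] {H K G : Multigraph α β}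
    {f : β} {u v : α} (hH : IsSubgraph H (K.addEdge f u v)) (hf : f ∉ H.edges)
    (hK : IsSubgraph K G) (hu : u ∈ G.verts) (hv : v ∈ G.verts) : IsSubgraph H G := by
  have hne : ∀ e ∈ H.edges, e ≠ f := fun e he hef => hf (hef ▸ he)
  refine ⟨fun x hx => ?_, fun e he => ?_, fun e he => ?_⟩
  · rcases Finset.mem_insert.1 (hH.1 hx) with rfl | hx
    · exact hu
    rcases Finset.mem_insert.1 hx with rfl | hx
    · exact hv
    · exact hK.1 hx
  · exact hK.2.1 ((Finset.mem_insert.1 (hH.2.1 he)).resolve_left (hne e he))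
  · have hKe : e ∈ K.edges := (Finset.mem_insert.1 (hH.2.1 he)).resolve_left (hne e he)
    obtain ⟨hfst, hsnd⟩ := hH.2.2 e he
    simp only [Multigraph.addEdge, Function.update_of_ne (hne e he)] at hfst hsnd
    exact ⟨hfst.trans (hK.2.2 e hKe).1, hsnd.trans (hK.2.2 e hKe).2⟩

theorem PMTight.addEdge_loop [DecidableEq α] [DecidableEq β] {G K : Multigraph α β}
    {m m' : β → PM} {f : β} {u : α} (hT : PMTight G m) (hK : IsSubgraph K G)
    (hu : u ∈ G.verts) (hm' : ∀ e ≠ f, m' e = m e) (hf : (m' f).r = true)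
    (htight : Tight 2 1 (K.addEdge f u u)) : PMTight (K.addEdge f u u) m' := by
  have of_purelyPeriodic : ∀ H, IsSubgraph H (K.addEdge f u u) → PurelyPeriodic H m' →
      IsSubgraph H G ∧ ∀ e ∈ H.edges, m' e = m e := by
    intro H hH hPP
    have hfH : f ∉ H.edges := fun hfH => by
      have hloop : H.fst f = H.snd f := by
        rw [(hH.2.2 f hfH).1, (hH.2.2 f hfH).2]
        simp [Multigraph.addEdge]
      simp [hPP.r_eq_false_of_loop hfH hloop] at hf
    exact ⟨hH.of_addEdge hfH hK hu hu, fun e he => hm' e fun hef => hfH (hef ▸ he)⟩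
  refine ⟨htight, fun H hH hPP => ?_, fun H hH hB => ?_⟩
  · obtain ⟨hHG, hagree⟩ := of_purelyPeriodic H hH hPP
    exact hT.2.1 H hHG (hPP.congr hagree)
  · obtain ⟨hHG, hagree⟩ := of_purelyPeriodic H hH hB.purelyPeriodic_s13
    exact hT.2.2 H hHG (hB.congr hagree)

theorem diffCs_loopReduction_tight_general {α β : Type} [DecidableEq α] [DecidableEq β]
    (G : Multigraph α β) (m : β → PM) (hT : PMTight G m)
    (v₀ v₂ : α) (e₂ e₃ : β) (hm₂ : e₂ ∈ G.edges) (hs₂ : G.snd e₂ = v₂)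
    (hr : (m e₂).r ≠ (m e₃).r)
    (htight : Tight 2 1 ((G.deleteVertex v₀).addEdge e₂ v₂ v₂)) :
    PMTight ((G.deleteVertex v₀).addEdge e₂ v₂ v₂)
      (Function.update m e₂ ((m e₂)⁻¹ * m e₃)) := by
  have hv₂ : v₂ ∈ G.verts := hs₂ ▸ G.snd_mem e₂ hm₂
  have hloop : (Function.update m e₂ ((m e₂)⁻¹ * m e₃) e₂).r = true := by
    simpa [Bool.xor_iff_ne] using hr
  exact hT.addEdge_loop (G.deleteVertex_isSubgraph v₀) hv₂
    (fun e he => Function.update_of_ne he _ _) hloop htight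

/-- If the two parallel edges at a degree-3 vertex with two
neighbours have different `𝒞ₛ`-components and the loop 1-reduction gives a
`(2,1)`-tight graph, then that reduction is `ℤ²⋊𝒞ₛ`-tight. -/
theorem diffCs_loopReduction_tight {α β : Type} [DecidableEq α] [DecidableEq β]
    (G : Multigraph α β) (m : β → PM) (hGm : IsGainGraph G m) (hT : PMTight G m)
    (v₀ v₁ v₂ : α) (h01 : v₁ ≠ v₀) (h02 : v₂ ≠ v₀) (h12 : v₁ ≠ v₂)
    (hv₀ : v₀ ∈ G.verts) (hdeg : G.degree v₀ = 3)
    (e₁ e₂ e₃ : β) (he12 : e₁ ≠ e₂) (he13 : e₁ ≠ e₃) (he23 : e₂ ≠ e₃)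
    (hm₁ : e₁ ∈ G.edges) (hm₂ : e₂ ∈ G.edges) (hm₃ : e₃ ∈ G.edges)
    (hf₁ : G.fst e₁ = v₀) (hs₁ : G.snd e₁ = v₁)
    (hf₂ : G.fst e₂ = v₀) (hs₂ : G.snd e₂ = v₂)
    (hf₃ : G.fst e₃ = v₀) (hs₃ : G.snd e₃ = v₂)
    (hr : (m e₂).r ≠ (m e₃).r)
    (htight : Tight 2 1 ((G.deleteVertex v₀).addEdge e₂ v₂ v₂)) :
    PMTight ((G.deleteVertex v₀).addEdge e₂ v₂ v₂)
      (Function.update m e₂ ((m e₂)⁻¹ * m e₃)) :=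
  diffCs_loopReduction_tight_general G m hT v₀ v₂ e₂ e₃ hm₂ hs₂ hr htight

end Crystal
end

section
/- Let G be a (2,1)-tight multigraph with a vertex v₀ of degree 3 having three distinct neighbours v₁,v₂,v₃ (all different from v₀). Let G₁₂=(V₁₂,E₁₂) be a (2,3)-tight subgraph of G with v₁,v₂∈V₁₂ and v₀∉V₁₂, and let G₂₃=(V₂₃,E₂₃) be a (2,3)-tight subgraph of G with v₂,v₃∈V₂₃ and v₀∉V₂₃. Then exactly one of the following holds: (1) |V₁₂∩V₂₃|>1, |E₁₂∪E₂₃|=2|V₁₂∪V₂₃|−3 and |E₁₂∩E₂₃|=2|V₁₂∩V₂₃|−3; (2) |V₁₂∩V₂₃|>1, |E₁₂∪E₂₃|=2|V₁₂∪V₂₃|−2 and |E₁₂∩E₂₃|=2|V₁₂∩V₂₃|−4; (3) |V₁₂∩V₂₃|=1 and |E₁₂∪E₂₃|=2|V₁₂∪V₂₃|−4. -/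
namespace Crystal

variable {α β : Type}

/-! Add `v₀` and its three edges to `G₁₂ ∪ G₂₃`: `(2,1)`-sparsity of `G` gives
`|E₁₂ ∪ E₂₃| ≤ 2|V₁₂ ∪ V₂₃| - 2`. On the other side, inclusion–exclusion and the
`(2,3)`-sparsity of `G₁₂ ∩ G₂₃` (which contains `v₂`, and has no edges if `v₂` is its only
vertex) give `|E₁₂ ∪ E₂₃| ≥ 2|V₁₂ ∪ V₂₃| - 3` when the intersection has at least two vertices,
and `= 2|V₁₂ ∪ V₂₃| - 4` otherwise. -/

theorem Sparse.card_edges_le {k l : ℕ} {G : Multigraph α β} (hG : Sparse k l G)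
    {V : Finset α} {E : Finset β} (hV : V ⊆ G.verts) (hE : E ⊆ G.edges)
    (hends : ∀ e ∈ E, G.fst e ∈ V ∧ G.snd e ∈ V) (hne : E.Nonempty) :
    (E.card : ℤ) ≤ k * V.card - l :=
  hG ⟨V, E, G.fst, G.snd, fun e he => (hends e he).1, fun e he => (hends e he).2⟩
    ⟨hV, hE, fun _ _ => ⟨rfl, rfl⟩⟩ (Finset.card_pos.2 hne)

theorem IsSubgraph.ends_mem {H G : Multigraph α β} (h : IsSubgraph H G) {e : β}
    (he : e ∈ H.edges) : G.fst e ∈ H.verts ∧ G.snd e ∈ H.verts :=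
  ⟨(h.2.2 e he).1 ▸ H.fst_mem e he, (h.2.2 e he).2 ▸ H.snd_mem e he⟩

theorem IsSubgraph.ends_mem_union [DecidableEq α] [DecidableEq β] {H₁ H₂ G : Multigraph α β}
    (h₁ : IsSubgraph H₁ G) (h₂ : IsSubgraph H₂ G) :
    ∀ e ∈ H₁.edges ∪ H₂.edges,
      G.fst e ∈ H₁.verts ∪ H₂.verts ∧ G.snd e ∈ H₁.verts ∪ H₂.verts := by
  intro e he
  rcases Finset.mem_union.1 he with he | he
  · exact ⟨Finset.mem_union_left _ (h₁.ends_mem he).1, Finset.mem_union_left _ (h₁.ends_mem he).2⟩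
  · exact ⟨Finset.mem_union_right _ (h₂.ends_mem he).1,
      Finset.mem_union_right _ (h₂.ends_mem he).2⟩

theorem Sparse.card_inter_edges_le [DecidableEq α] [DecidableEq β] {k l : ℕ}
    {H₁ H₂ G : Multigraph α β} (hsp : Sparse k l H₁) (h₁ : IsSubgraph H₁ G)
    (h₂ : IsSubgraph H₂ G) (hne : (H₁.edges ∩ H₂.edges).Nonempty) :
    ((H₁.edges ∩ H₂.edges).card : ℤ) ≤ k * (H₁.verts ∩ H₂.verts).card - l := by
  refine hsp.card_edges_le Finset.inter_subset_left Finset.inter_subset_left (fun e he => ?_) hne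
  obtain ⟨he₁, he₂⟩ := Finset.mem_inter.1 he
  obtain ⟨hfst, hsnd⟩ := h₁.2.2 e he₁
  exact ⟨Finset.mem_inter.2 ⟨H₁.fst_mem e he₁, hfst ▸ (h₂.ends_mem he₂).1⟩,
    Finset.mem_inter.2 ⟨H₁.snd_mem e he₁, hsnd ▸ (h₂.ends_mem he₂).2⟩⟩

theorem Sparse.card_add_card_le_of_insert [DecidableEq α] [DecidableEq β] {k l : ℕ}
    {G : Multigraph α β} (hG : Sparse k l G) {V : Finset α} {E F : Finset β} {v : α}
    (hV : V ⊆ G.verts) (hE : E ⊆ G.edges) (hends : ∀ e ∈ E, G.fst e ∈ V ∧ G.snd e ∈ V)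
    (hv : v ∈ G.verts) (hvV : v ∉ V) (hF : F ⊆ G.edges)
    (hFends : ∀ e ∈ F, G.fst e ∈ insert v V ∧ G.snd e ∈ insert v V)
    (hFv : ∀ e ∈ F, G.fst e = v ∨ G.snd e = v) (hne : F.Nonempty) :
    (E.card + F.card : ℤ) ≤ k * (V.card + 1) - l := by
  have hdisj : Disjoint E F := by
    refine Finset.disjoint_left.2 fun e heE heF => hvV ?_
    rcases hFv e heF with h | h
    exacts [h ▸ (hends e heE).1, h ▸ (hends e heE).2]
  have hends' : ∀ e ∈ E ∪ F, G.fst e ∈ insert v V ∧ G.snd e ∈ insert v V := by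
    intro e he
    rcases Finset.mem_union.1 he with he | he
    · exact ⟨Finset.mem_insert_of_mem (hends e he).1, Finset.mem_insert_of_mem (hends e he).2⟩
    · exact hFends e he
  have := hG.card_edges_le (Finset.insert_subset hv hV) (Finset.union_subset hE hF) hends'
    (hne.mono Finset.subset_union_right)
  rw [Finset.card_union_of_disjoint hdisj, Finset.card_insert_of_notMem hvV] at this
  push_cast at this
  exact this

theorem ends_mem_insert_of_otherEnd_mem [DecidableEq α] {G : Multigraph α β} {v : α} {e : β}
    {V : Finset α} (hev : G.fst e = v ∨ G.snd e = v) (hw : otherEnd G v e ∈ V) :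
    G.fst e ∈ insert v V ∧ G.snd e ∈ insert v V := by
  unfold otherEnd at hw
  by_cases h : G.fst e = v
  · rw [if_pos h] at hw
    exact ⟨h ▸ Finset.mem_insert_self _ _, Finset.mem_insert_of_mem hw⟩
  · rw [if_neg h] at hw
    exact ⟨Finset.mem_insert_of_mem hw, hev.resolve_left h ▸ Finset.mem_insert_self _ _⟩

theorem tight23_pair_counts_general {α β : Type} [DecidableEq α] [DecidableEq β]
    (G : Multigraph α β) (hG : Tight 2 1 G)
    (v₀ v₁ v₂ v₃ : α)
    (hv₀ : v₀ ∈ G.verts)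
    (e₁ e₂ e₃ : β) (he12 : e₁ ≠ e₂) (he13 : e₁ ≠ e₃) (he23 : e₂ ≠ e₃)
    (hm₁ : e₁ ∈ G.edges) (hm₂ : e₂ ∈ G.edges) (hm₃ : e₃ ∈ G.edges)
    (hi₁ : G.fst e₁ = v₀ ∨ G.snd e₁ = v₀) (ho₁ : otherEnd G v₀ e₁ = v₁)
    (hi₂ : G.fst e₂ = v₀ ∨ G.snd e₂ = v₀) (ho₂ : otherEnd G v₀ e₂ = v₂)
    (hi₃ : G.fst e₃ = v₀ ∨ G.snd e₃ = v₀) (ho₃ : otherEnd G v₀ e₃ = v₃)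
    (G₁₂ G₂₃ : Multigraph α β)
    (hsub₁₂ : IsSubgraph G₁₂ G) (ht₁₂ : Tight 2 3 G₁₂)
    (hv₁₁₂ : v₁ ∈ G₁₂.verts) (hv₂₁₂ : v₂ ∈ G₁₂.verts) (hv₀₁₂ : v₀ ∉ G₁₂.verts)
    (hsub₂₃ : IsSubgraph G₂₃ G) (ht₂₃ : Tight 2 3 G₂₃)
    (hv₂₂₃ : v₂ ∈ G₂₃.verts) (hv₃₂₃ : v₃ ∈ G₂₃.verts) (hv₀₂₃ : v₀ ∉ G₂₃.verts) :
    ((1 < (G₁₂.verts ∩ G₂₃.verts).card ∧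
        ((G₁₂.edges ∪ G₂₃.edges).card : ℤ) = 2 * (G₁₂.verts ∪ G₂₃.verts).card - 3 ∧
        ((G₁₂.edges ∩ G₂₃.edges).card : ℤ) = 2 * (G₁₂.verts ∩ G₂₃.verts).card - 3) ∨
      (1 < (G₁₂.verts ∩ G₂₃.verts).card ∧
        ((G₁₂.edges ∪ G₂₃.edges).card : ℤ) = 2 * (G₁₂.verts ∪ G₂₃.verts).card - 2 ∧
        ((G₁₂.edges ∩ G₂₃.edges).card : ℤ) = 2 * (G₁₂.verts ∩ G₂₃.verts).card - 4) ∨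
      ((G₁₂.verts ∩ G₂₃.verts).card = 1 ∧
        ((G₁₂.edges ∪ G₂₃.edges).card : ℤ) = 2 * (G₁₂.verts ∪ G₂₃.verts).card - 4)) ∧
    ¬ ((1 < (G₁₂.verts ∩ G₂₃.verts).card ∧
        ((G₁₂.edges ∪ G₂₃.edges).card : ℤ) = 2 * (G₁₂.verts ∪ G₂₃.verts).card - 3 ∧
        ((G₁₂.edges ∩ G₂₃.edges).card : ℤ) = 2 * (G₁₂.verts ∩ G₂₃.verts).card - 3) ∧
      (1 < (G₁₂.verts ∩ G₂₃.verts).card ∧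
        ((G₁₂.edges ∪ G₂₃.edges).card : ℤ) = 2 * (G₁₂.verts ∪ G₂₃.verts).card - 2 ∧
        ((G₁₂.edges ∩ G₂₃.edges).card : ℤ) = 2 * (G₁₂.verts ∩ G₂₃.verts).card - 4)) ∧
    ¬ ((1 < (G₁₂.verts ∩ G₂₃.verts).card ∧
        ((G₁₂.edges ∪ G₂₃.edges).card : ℤ) = 2 * (G₁₂.verts ∪ G₂₃.verts).card - 3 ∧
        ((G₁₂.edges ∩ G₂₃.edges).card : ℤ) = 2 * (G₁₂.verts ∩ G₂₃.verts).card - 3) ∧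
      ((G₁₂.verts ∩ G₂₃.verts).card = 1 ∧
        ((G₁₂.edges ∪ G₂₃.edges).card : ℤ) = 2 * (G₁₂.verts ∪ G₂₃.verts).card - 4)) ∧
    ¬ ((1 < (G₁₂.verts ∩ G₂₃.verts).card ∧
        ((G₁₂.edges ∪ G₂₃.edges).card : ℤ) = 2 * (G₁₂.verts ∪ G₂₃.verts).card - 2 ∧
        ((G₁₂.edges ∩ G₂₃.edges).card : ℤ) = 2 * (G₁₂.verts ∩ G₂₃.verts).card - 4) ∧
      ((G₁₂.verts ∩ G₂₃.verts).card = 1 ∧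
        ((G₁₂.edges ∪ G₂₃.edges).card : ℤ) = 2 * (G₁₂.verts ∪ G₂₃.verts).card - 4)) := by
  obtain ⟨hGsp, -⟩ := hG
  obtain ⟨hsp₁₂, hcard₁₂⟩ := ht₁₂
  obtain ⟨-, hcard₂₃⟩ := ht₂₃
  have hv₀U : v₀ ∉ G₁₂.verts ∪ G₂₃.verts := by
    rw [Finset.mem_union]; tauto
  have hstar := hGsp.card_add_card_le_of_insert (F := {e₁, e₂, e₃})
    (Finset.union_subset hsub₁₂.1 hsub₂₃.1) (Finset.union_subset hsub₁₂.2.1 hsub₂₃.2.1)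
    (hsub₁₂.ends_mem_union hsub₂₃) hv₀ hv₀U
    (by simp only [Finset.insert_subset_iff, Finset.singleton_subset_iff]; exact ⟨hm₁, hm₂, hm₃⟩)
    (by
      simp only [Finset.forall_mem_insert, Finset.mem_singleton, forall_eq]
      exact ⟨ends_mem_insert_of_otherEnd_mem hi₁ (ho₁ ▸ Finset.mem_union_left _ hv₁₁₂),
        ends_mem_insert_of_otherEnd_mem hi₂ (ho₂ ▸ Finset.mem_union_left _ hv₂₁₂),
        ends_mem_insert_of_otherEnd_mem hi₃ (ho₃ ▸ Finset.mem_union_right _ hv₃₂₃)⟩)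
    (by simp only [Finset.forall_mem_insert, Finset.mem_singleton, forall_eq]
        exact ⟨hi₁, hi₂, hi₃⟩)
    (Finset.insert_nonempty _ _)
  rw [Finset.card_eq_three.2 ⟨e₁, e₂, e₃, he12, he13, he23, rfl⟩] at hstar
  have hinter : (G₁₂.edges ∩ G₂₃.edges).card = 0 ∨
      ((G₁₂.edges ∩ G₂₃.edges).card : ℤ) ≤ 2 * (G₁₂.verts ∩ G₂₃.verts).card - 3 := by
    rcases (G₁₂.edges ∩ G₂₃.edges).eq_empty_or_nonempty with h | h
    · exact Or.inl (Finset.card_eq_zero.2 h)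
    · exact Or.inr (hsp₁₂.card_inter_edges_le hsub₁₂ hsub₂₃ h)
  have hV := Finset.card_union_add_card_inter G₁₂.verts G₂₃.verts
  have hE := Finset.card_union_add_card_inter G₁₂.edges G₂₃.edges
  have hv₂ : 1 ≤ (G₁₂.verts ∩ G₂₃.verts).card :=
    Finset.card_pos.2 ⟨v₂, Finset.mem_inter.2 ⟨hv₂₁₂, hv₂₂₃⟩⟩
  omega

/-- The possible union/intersection counts for two `(2,3)`-tight
blockers at a degree-3 vertex with three distinct neighbours: exactly one of the
three listed cases holds. -/
theorem tight23_pair_counts {α β : Type} [DecidableEq α] [DecidableEq β]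
    (G : Multigraph α β) (hG : Tight 2 1 G)
    (v₀ v₁ v₂ v₃ : α) (h01 : v₁ ≠ v₀) (h02 : v₂ ≠ v₀) (h03 : v₃ ≠ v₀)
    (h12 : v₁ ≠ v₂) (h13 : v₁ ≠ v₃) (h23 : v₂ ≠ v₃)
    (hv₀ : v₀ ∈ G.verts) (hdeg : G.degree v₀ = 3)
    (e₁ e₂ e₃ : β) (he12 : e₁ ≠ e₂) (he13 : e₁ ≠ e₃) (he23 : e₂ ≠ e₃)
    (hm₁ : e₁ ∈ G.edges) (hm₂ : e₂ ∈ G.edges) (hm₃ : e₃ ∈ G.edges)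
    (hi₁ : G.fst e₁ = v₀ ∨ G.snd e₁ = v₀) (ho₁ : otherEnd G v₀ e₁ = v₁)
    (hi₂ : G.fst e₂ = v₀ ∨ G.snd e₂ = v₀) (ho₂ : otherEnd G v₀ e₂ = v₂)
    (hi₃ : G.fst e₃ = v₀ ∨ G.snd e₃ = v₀) (ho₃ : otherEnd G v₀ e₃ = v₃)
    (G₁₂ G₂₃ : Multigraph α β)
    (hsub₁₂ : IsSubgraph G₁₂ G) (ht₁₂ : Tight 2 3 G₁₂)
    (hv₁₁₂ : v₁ ∈ G₁₂.verts) (hv₂₁₂ : v₂ ∈ G₁₂.verts) (hv₀₁₂ : v₀ ∉ G₁₂.verts)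
    (hsub₂₃ : IsSubgraph G₂₃ G) (ht₂₃ : Tight 2 3 G₂₃)
    (hv₂₂₃ : v₂ ∈ G₂₃.verts) (hv₃₂₃ : v₃ ∈ G₂₃.verts) (hv₀₂₃ : v₀ ∉ G₂₃.verts) :
    ((1 < (G₁₂.verts ∩ G₂₃.verts).card ∧
        ((G₁₂.edges ∪ G₂₃.edges).card : ℤ) = 2 * (G₁₂.verts ∪ G₂₃.verts).card - 3 ∧
        ((G₁₂.edges ∩ G₂₃.edges).card : ℤ) = 2 * (G₁₂.verts ∩ G₂₃.verts).card - 3) ∨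
      (1 < (G₁₂.verts ∩ G₂₃.verts).card ∧
        ((G₁₂.edges ∪ G₂₃.edges).card : ℤ) = 2 * (G₁₂.verts ∪ G₂₃.verts).card - 2 ∧
        ((G₁₂.edges ∩ G₂₃.edges).card : ℤ) = 2 * (G₁₂.verts ∩ G₂₃.verts).card - 4) ∨
      ((G₁₂.verts ∩ G₂₃.verts).card = 1 ∧
        ((G₁₂.edges ∪ G₂₃.edges).card : ℤ) = 2 * (G₁₂.verts ∪ G₂₃.verts).card - 4)) ∧
    ¬ ((1 < (G₁₂.verts ∩ G₂₃.verts).card ∧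
        ((G₁₂.edges ∪ G₂₃.edges).card : ℤ) = 2 * (G₁₂.verts ∪ G₂₃.verts).card - 3 ∧
        ((G₁₂.edges ∩ G₂₃.edges).card : ℤ) = 2 * (G₁₂.verts ∩ G₂₃.verts).card - 3) ∧
      (1 < (G₁₂.verts ∩ G₂₃.verts).card ∧
        ((G₁₂.edges ∪ G₂₃.edges).card : ℤ) = 2 * (G₁₂.verts ∪ G₂₃.verts).card - 2 ∧
        ((G₁₂.edges ∩ G₂₃.edges).card : ℤ) = 2 * (G₁₂.verts ∩ G₂₃.verts).card - 4)) ∧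
    ¬ ((1 < (G₁₂.verts ∩ G₂₃.verts).card ∧
        ((G₁₂.edges ∪ G₂₃.edges).card : ℤ) = 2 * (G₁₂.verts ∪ G₂₃.verts).card - 3 ∧
        ((G₁₂.edges ∩ G₂₃.edges).card : ℤ) = 2 * (G₁₂.verts ∩ G₂₃.verts).card - 3) ∧
      ((G₁₂.verts ∩ G₂₃.verts).card = 1 ∧
        ((G₁₂.edges ∪ G₂₃.edges).card : ℤ) = 2 * (G₁₂.verts ∪ G₂₃.verts).card - 4)) ∧
    ¬ ((1 < (G₁₂.verts ∩ G₂₃.verts).card ∧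
        ((G₁₂.edges ∪ G₂₃.edges).card : ℤ) = 2 * (G₁₂.verts ∪ G₂₃.verts).card - 2 ∧
        ((G₁₂.edges ∩ G₂₃.edges).card : ℤ) = 2 * (G₁₂.verts ∩ G₂₃.verts).card - 4) ∧
      ((G₁₂.verts ∩ G₂₃.verts).card = 1 ∧
        ((G₁₂.edges ∪ G₂₃.edges).card : ℤ) = 2 * (G₁₂.verts ∪ G₂₃.verts).card - 4)) :=
  tight23_pair_counts_general G hG v₀ v₁ v₂ v₃ hv₀ e₁ e₂ e₃ he12 he13 he23 hm₁ hm₂ hm₃ hi₁ ho₁ hi₂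
    ho₂ hi₃ ho₃ G₁₂ G₂₃ hsub₁₂ ht₁₂ hv₁₁₂ hv₂₁₂ hv₀₁₂ hsub₂₃ ht₂₃ hv₂₂₃ hv₃₂₃ hv₀₂₃

end Crystal
end
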